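/- Let m ≥ 3 be an integer. There exists a constant C > 0 such that for all x, y ∈ [0,π] with x ≠ y, |K_m(x,y)| ≤ C·( sin(y)·cot(|x−y|/2) + sin(y) ). -/

import Mathlib

/-- For an integer `m ≥ 3` and `x, y ∈ [0,π]` with `x ≠ y`, the kernel
`K_m(x,y) = (1/(2π))·log((1 − cos(x+y))/(1 − cos(x−y)))
  + (6/π)·∑_{k=1}^∞ sin(kx)·sin(ky)/(m²k³ − 4k)`. -/
noncomputable def Kker (m : ℕ) (x y : ℝ) : ℝ :=
  1 / (2 * Real.pi) * Real.log ((1 - Real.cos (x + y)) / (1 - Real.cos (x - y))) +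
    6 / Real.pi * ∑' k : ℕ,
      Real.sin (((k : ℝ) + 1) * x) * Real.sin (((k : ℝ) + 1) * y) /
        ((m : ℝ) ^ 2 * ((k : ℝ) + 1) ^ 3 - 4 * ((k : ℝ) + 1))


lemma one_sub_cos (t : ℝ) : 1 - Real.cos t = 2 * Real.sin (t/2)^2 := by
  have h : Real.cos t = Real.cos (t/2)^2 - Real.sin (t/2)^2 := by
    rw [← Real.cos_two_mul']; ring_nf
  nlinarith [Real.sin_sq_add_cos_sq (t/2)]

lemma abs_sin_nat_mul (y : ℝ) : ∀ n : ℕ, |Real.sin (n*y)| ≤ n * |Real.sin y| := by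
  intro n
  induction n with
  | zero => simp
  | succ n ih =>
    have heq : ((n:ℝ)+1)*y = n*y + y := by ring
    push_cast
    rw [heq, Real.sin_add]
    have h1 : |Real.sin (↑n*y)| * |Real.cos y| ≤ ↑n*|Real.sin y| := by
      calc |Real.sin (↑n*y)| * |Real.cos y| ≤ (↑n*|Real.sin y|) * 1 :=
            mul_le_mul ih (Real.abs_cos_le_one y) (abs_nonneg _) (by positivity)
        _ = ↑n*|Real.sin y| := mul_one _
    have h2 : |Real.cos (↑n*y)| * |Real.sin y| ≤ |Real.sin y| := by
      calc |Real.cos (↑n*y)| * |Real.sin y| ≤ 1 * |Real.sin y| :=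
            mul_le_mul_of_nonneg_right (Real.abs_cos_le_one _) (abs_nonneg _)
        _ = |Real.sin y| := one_mul _
    calc |Real.sin (↑n*y) * Real.cos y + Real.cos (↑n*y) * Real.sin y|
        ≤ |Real.sin (↑n*y) * Real.cos y| + |Real.cos (↑n*y) * Real.sin y| := abs_add_le _ _
      _ = |Real.sin (↑n*y)| * |Real.cos y| + |Real.cos (↑n*y)| * |Real.sin y| := by
          rw [abs_mul, abs_mul]
      _ ≤ ↑n*|Real.sin y| + |Real.sin y| := add_le_add h1 h2
      _ = ((n:ℝ)+1) * |Real.sin y| := by ring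

lemma summable_inv_sq : Summable (fun k : ℕ => 1/(5*((k:ℝ)+1)^2)) := by
  have h : Summable (fun n : ℕ => 1/((n:ℝ))^2) :=
    Real.summable_one_div_nat_pow.mpr (by norm_num)
  have h2 : Summable (fun k : ℕ => 1/(((k:ℝ)+1))^2) := by
    have := (summable_nat_add_iff 1).mpr h
    simpa using this
  have := h2.div_const 5
  exact this.congr fun k => by field_simp

/-- key halved-angle estimates -/
lemma sin_half_bounds {x y : ℝ} (hx0 : 0 ≤ x) (hxπ : x ≤ Real.pi)
    (hy0 : 0 ≤ y) (hyπ : y ≤ Real.pi) :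
    Real.sin (|x-y|/2) ≤ Real.sin ((x+y)/2) ∧
    Real.sin ((x+y)/2) - Real.sin (|x-y|/2) ≤ Real.sin y := by
  have hsy : Real.sin y = 2*Real.sin (y/2)*Real.cos (y/2) := by
    have := Real.sin_two_mul (y/2)
    rw [show 2*(y/2) = y by ring] at this
    exact this
  have pi_pos := Real.pi_pos
  rcases le_total x y with h | h
  · have hab : |x-y| = y - x := by rw [abs_sub_comm]; exact abs_of_nonneg (by linarith)
    rw [hab]
    have hdiff : Real.sin ((x+y)/2) - Real.sin ((y-x)/2)
        = 2 * Real.sin (x/2) * Real.cos (y/2) := by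
      rw [Real.sin_sub_sin]
      ring_nf
    have hsx2 : 0 ≤ Real.sin (x/2) := Real.sin_nonneg_of_nonneg_of_le_pi (by linarith) (by linarith)
    have hcy2 : 0 ≤ Real.cos (y/2) :=
      Real.cos_nonneg_of_mem_Icc ⟨by linarith, by linarith⟩
    constructor
    · nlinarith
    · rw [hdiff, hsy]
      have hsle : Real.sin (x/2) ≤ Real.sin (y/2) :=
        Real.sin_le_sin_of_le_of_le_pi_div_two (by linarith) (by linarith) (by linarith)
      nlinarith
  · have hab : |x-y| = x - y := abs_of_nonneg (by linarith)
    rw [hab]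
    have hdiff : Real.sin ((x+y)/2) - Real.sin ((x-y)/2)
        = 2 * Real.sin (y/2) * Real.cos (x/2) := by
      rw [Real.sin_sub_sin]
      ring_nf
    have hsy2 : 0 ≤ Real.sin (y/2) := Real.sin_nonneg_of_nonneg_of_le_pi (by linarith) (by linarith)
    have hcx2 : 0 ≤ Real.cos (x/2) :=
      Real.cos_nonneg_of_mem_Icc ⟨by linarith, by linarith⟩
    constructor
    · nlinarith
    · rw [hdiff, hsy]
      have hcle : Real.cos (x/2) ≤ Real.cos (y/2) :=
        Real.cos_le_cos_of_nonneg_of_le_pi (by linarith) (by linarith) (by linarith)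
      nlinarith

set_option maxHeartbeats 1000000 in
/-- For `m ≥ 3`, there is `C > 0` with
`|K_m(x,y)| ≤ C·(sin(y)·cot(|x−y|/2) + sin(y))` for all `x, y ∈ [0,π]`, `x ≠ y`. -/
theorem Kker_abs_le (m : ℕ) (hm : 3 ≤ m) :
    ∃ C > 0, ∀ x ∈ Set.Icc (0:ℝ) Real.pi, ∀ y ∈ Set.Icc (0:ℝ) Real.pi, x ≠ y →
      |Kker m x y| ≤ C * (Real.sin y * Real.cot (|x - y| / 2) + Real.sin y) := by
  have pi_pos := Real.pi_pos
  set T : ℝ := ∑' k : ℕ, 1/(5*((k:ℝ)+1)^2) with hT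
  have hT0 : 0 ≤ T := tsum_nonneg (fun k => by positivity)
  refine ⟨1 + 6/Real.pi * T, by positivity, ?_⟩
  rintro x ⟨hx0, hxπ⟩ y ⟨hy0, hyπ⟩ hxy
  set b : ℝ := |x - y| / 2 with hbdef
  set a : ℝ := (x + y) / 2 with hadef
  have hb0 : 0 < b := by
    have : 0 < |x - y| := abs_pos.mpr (sub_ne_zero.mpr hxy)
    positivity
  have hbπ : b ≤ Real.pi / 2 := by
    have : |x - y| ≤ Real.pi := abs_sub_le_iff.mpr ⟨by linarith, by linarith⟩
    rw [hbdef]; linarith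
  have hsb : 0 < Real.sin b := Real.sin_pos_of_pos_of_lt_pi hb0 (by linarith)
  have hsy : 0 ≤ Real.sin y := Real.sin_nonneg_of_nonneg_of_le_pi hy0 hyπ
  have hcb : 0 ≤ Real.cos b := Real.cos_nonneg_of_mem_Icc ⟨by linarith, hbπ⟩
  have hcotb : 0 ≤ Real.cot b := by
    rw [Real.cot_eq_cos_div_sin]; positivity
  obtain ⟨hba, hdiff⟩ := sin_half_bounds hx0 hxπ hy0 hyπ
  -- the log term
  have hratio : (1 - Real.cos (x + y)) / (1 - Real.cos (x - y))
      = (Real.sin a / Real.sin b)^2 := by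
    have hsq : Real.sin ((x-y)/2)^2 = Real.sin b^2 := by
      rcases abs_cases (x - y) with ⟨h, -⟩ | ⟨h, -⟩
      · rw [hbdef, h]
      · rw [hbdef, h, neg_div, Real.sin_neg]; ring
    rw [one_sub_cos (x+y), one_sub_cos (x-y), hsq, ← hadef]
    rw [div_pow]
    have h2 : Real.sin b ^ 2 ≠ 0 := by positivity
    field_simp
  have hsb' : Real.sin b ≠ 0 := ne_of_gt hsb
  have hlog : Real.log ((1 - Real.cos (x + y)) / (1 - Real.cos (x - y)))
      = 2 * Real.log (Real.sin a / Real.sin b) := by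
    rw [hratio, Real.log_pow]
    norm_num
  have hlog0 : 0 ≤ Real.log (Real.sin a / Real.sin b) :=
    Real.log_nonneg ((one_le_div hsb).mpr hba)
  have hlogle : Real.log (Real.sin a / Real.sin b) ≤ Real.sin y / Real.sin b := by
    have h1 : Real.log (Real.sin a / Real.sin b) ≤ Real.sin a / Real.sin b - 1 :=
      Real.log_le_sub_one_of_pos (div_pos (lt_of_lt_of_le hsb hba) hsb)
    have h2 : Real.sin a / Real.sin b - 1 = (Real.sin a - Real.sin b) / Real.sin b := by
      field_simp
    rw [h2] at h1
    calc Real.log (Real.sin a / Real.sin b)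
        ≤ (Real.sin a - Real.sin b) / Real.sin b := h1
      _ ≤ Real.sin y / Real.sin b := by gcongr
  -- sin y / sin b ≤ sin y * cot b + sin y
  have hone : 1 ≤ Real.cos b + Real.sin b := by
    nlinarith [Real.sin_sq_add_cos_sq b, Real.sin_le_one b, Real.cos_le_one b]
  have hkey : Real.sin y / Real.sin b ≤ Real.sin y * Real.cot b + Real.sin y := by
    rw [Real.cot_eq_cos_div_sin]
    rw [div_le_iff₀ hsb]
    have : (Real.sin y * (Real.cos b / Real.sin b) + Real.sin y) * Real.sin b
        = Real.sin y * (Real.cos b + Real.sin b) := by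
      field_simp
    rw [this]
    nlinarith
  -- the series term
  set f : ℕ → ℝ := fun k =>
      Real.sin (((k : ℝ) + 1) * x) * Real.sin (((k : ℝ) + 1) * y) /
        ((m : ℝ) ^ 2 * ((k : ℝ) + 1) ^ 3 - 4 * ((k : ℝ) + 1)) with hf
  have hm9 : (9:ℝ) ≤ (m:ℝ)^2 := by
    have : (3:ℝ) ≤ (m:ℝ) := by exact_mod_cast hm
    nlinarith
  have hterm : ∀ k : ℕ, |f k| ≤ Real.sin y * (1/(5*((k:ℝ)+1)^2)) := by
    intro k
    have hk1 : (0:ℝ) < (k:ℝ) + 1 := by positivity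
    have ht1 : (1:ℝ) ≤ (k:ℝ) + 1 := by
      have : (0:ℝ) ≤ (k:ℝ) := Nat.cast_nonneg k
      linarith
    have ht2 : (1:ℝ) ≤ ((k:ℝ)+1)^2 := by nlinarith
    have hk3 : ((k:ℝ)+1) ≤ ((k:ℝ)+1)^3 := by
      nlinarith [mul_le_mul_of_nonneg_right ht2 hk1.le]
    have hD : 5*((k:ℝ)+1)^3 ≤ (m : ℝ) ^ 2 * ((k : ℝ) + 1) ^ 3 - 4 * ((k : ℝ) + 1) := by
      have h9 : 9*((k:ℝ)+1)^3 ≤ (m:ℝ)^2 * ((k:ℝ)+1)^3 :=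
        mul_le_mul_of_nonneg_right hm9 (by positivity)
      linarith
    have hDpos : (0:ℝ) < (m : ℝ) ^ 2 * ((k : ℝ) + 1) ^ 3 - 4 * ((k : ℝ) + 1) :=
      lt_of_lt_of_le (by positivity) hD
    have hnum : |Real.sin (((k : ℝ) + 1) * x) * Real.sin (((k : ℝ) + 1) * y)|
        ≤ ((k:ℝ)+1) * Real.sin y := by
      rw [abs_mul]
      have h1 : |Real.sin (((k : ℝ) + 1) * x)| ≤ 1 := Real.abs_sin_le_one _
      have h2 : |Real.sin (((k : ℝ) + 1) * y)| ≤ ((k:ℝ)+1) * |Real.sin y| := by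
        have := abs_sin_nat_mul y (k+1)
        push_cast at this
        exact this
      calc |Real.sin (((k : ℝ) + 1) * x)| * |Real.sin (((k : ℝ) + 1) * y)|
          ≤ 1 * (((k:ℝ)+1) * |Real.sin y|) :=
            mul_le_mul h1 h2 (abs_nonneg _) one_pos.le
        _ = ((k:ℝ)+1) * Real.sin y := by rw [one_mul, abs_of_nonneg hsy]
    simp only [hf]
    rw [abs_div, abs_of_pos hDpos]
    calc |Real.sin (((k : ℝ) + 1) * x) * Real.sin (((k : ℝ) + 1) * y)| /
          ((m : ℝ) ^ 2 * ((k : ℝ) + 1) ^ 3 - 4 * ((k : ℝ) + 1))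
        ≤ (((k:ℝ)+1) * Real.sin y) / (5*((k:ℝ)+1)^3) :=
          div_le_div₀ (by positivity) hnum (by positivity) hD
      _ = Real.sin y * (1/(5*((k:ℝ)+1)^2)) := by
          field_simp
  have hg : Summable (fun k : ℕ => Real.sin y * (1/(5*((k:ℝ)+1)^2))) :=
    summable_inv_sq.mul_left _
  have habs : Summable (fun k => |f k|) :=
    Summable.of_nonneg_of_le (fun k => abs_nonneg _) hterm hg
  have hsum : Summable f := habs.of_abs
  have htsum : |∑' k, f k| ≤ Real.sin y * T := by
    calc |∑' k, f k| ≤ ∑' k, |f k| := by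
          have := norm_tsum_le_tsum_norm (f := f) (by simpa [Real.norm_eq_abs] using habs)
          simpa [Real.norm_eq_abs] using this
      _ ≤ ∑' k : ℕ, Real.sin y * (1/(5*((k:ℝ)+1)^2)) := Summable.tsum_le_tsum hterm habs hg
      _ = Real.sin y * T := by rw [hT, tsum_mul_left]
  -- assemble
  set u : ℝ := Real.sin y * Real.cot b + Real.sin y with hu
  have hu0 : 0 ≤ u := by positivity
  have hyu : Real.sin y ≤ u := by nlinarith
  have hKker : Kker m x y =
      1 / (2 * Real.pi) * Real.log ((1 - Real.cos (x + y)) / (1 - Real.cos (x - y))) +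
        6 / Real.pi * ∑' k, f k := rfl
  rw [hKker]
  calc |1 / (2 * Real.pi) * Real.log ((1 - Real.cos (x + y)) / (1 - Real.cos (x - y))) +
        6 / Real.pi * ∑' k, f k|
      ≤ |1 / (2 * Real.pi) * Real.log ((1 - Real.cos (x + y)) / (1 - Real.cos (x - y)))| +
        |6 / Real.pi * ∑' k, f k| := abs_add_le _ _
    _ = 1 / (2 * Real.pi) * |Real.log ((1 - Real.cos (x + y)) / (1 - Real.cos (x - y)))| +
        6 / Real.pi * |∑' k, f k| := by
        rw [abs_mul, abs_mul, abs_of_pos (by positivity : (0:ℝ) < 1/(2*Real.pi)),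
          abs_of_pos (by positivity : (0:ℝ) < 6/Real.pi)]
    _ ≤ 1 / (2 * Real.pi) * (2 * (Real.sin y / Real.sin b)) +
        6 / Real.pi * (Real.sin y * T) := by
        refine add_le_add (mul_le_mul_of_nonneg_left ?_ (by positivity))
          (mul_le_mul_of_nonneg_left htsum (by positivity))
        rw [hlog, abs_of_nonneg (by linarith : (0:ℝ) ≤ 2 * Real.log (Real.sin a / Real.sin b))]
        linarith
    _ ≤ 1 / Real.pi * u + 6 / Real.pi * T * u := by
        have h1 : 1 / (2 * Real.pi) * (2 * (Real.sin y / Real.sin b)) =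
            1 / Real.pi * (Real.sin y / Real.sin b) := by field_simp
        rw [h1]
        have h2 : Real.sin y / Real.sin b ≤ u := le_trans hkey (le_of_eq hu.symm)
        have h3 : 6 / Real.pi * (Real.sin y * T) = 6 / Real.pi * T * Real.sin y := by ring
        rw [h3]
        exact add_le_add (mul_le_mul_of_nonneg_left h2 (by positivity))
          (mul_le_mul_of_nonneg_left hyu (by positivity))
    _ ≤ (1 + 6/Real.pi * T) * u := by
        have hπ1 : 1 / Real.pi * u ≤ 1 * u := by
          gcongr
          have : (1:ℝ) ≤ Real.pi := by nlinarith [Real.pi_gt_three]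
          rw [div_le_one (by positivity)]
          linarith
        nlinarith
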